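/- arXiv:2309.13843 — 4 statements merged into one kernel-verified Lean document; each statement's English description precedes it below -/
import Mathlib

section
/- Let λ_0, ..., λ_n be the barycentric coordinates on an n-simplex T. For α, β ∈ T^n_k, the function φ_α(x) = (1/α!) ∏_{i=0}^n ∏_{j=0}^{α_i - 1} (k λ_i(x) - j) satisfies φ_α(x_β) = δ_{α,β}, where x_β = (1/k) Σ_i β_i x_i is the interpolation point associated with β. -/
/-! At `x_β` one has `k λ_i = β_i`, so the `i`-th inner product is the falling factorial
`β_i (β_i - 1) ⋯ (β_i - α_i + 1)`. It equals `α_i!` when `β_i = α_i` and vanishes when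
`β_i < α_i`; since `α` and `β` have the same sum, `α ≠ β` forces `β_i < α_i` for some `i`. -/

open Finset

lemma Finset.exists_lt_of_sum_eq_of_ne {ι M : Type*} [Fintype ι] [AddCommMonoid M]
    [LinearOrder M] [IsOrderedCancelAddMonoid M] {f g : ι → M}
    (hsum : ∑ i, f i = ∑ i, g i) (hne : f ≠ g) : ∃ i, g i < f i := by
  by_contra! hle
  exact hne <| funext fun i =>
    (sum_eq_sum_iff_of_le fun i _ => hle i).mp hsum i (mem_univ i)

lemma prod_range_natCast_sub_eq_descFactorial {R : Type*} [CommRing R] (a b : ℕ) :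
    ∏ j ∈ range a, ((b : R) - j) = b.descFactorial a := by
  rw [← descPochhammer_eval_eq_prod_range, descPochhammer_eval_eq_descFactorial]

lemma prod_descFactorial_eq_ite {ι : Type*} [Fintype ι] {α β : ι → ℕ}
    (hsum : ∑ i, α i = ∑ i, β i) :
    ∏ i, (β i).descFactorial (α i) = if α = β then ∏ i, (α i).factorial else 0 := by
  split_ifs with h
  · subst h
    simp only [Nat.descFactorial_self]
  · obtain ⟨i, hi⟩ := exists_lt_of_sum_eq_of_ne hsum h
    exact prod_eq_zero (mem_univ i) (Nat.descFactorial_eq_zero_iff_lt.mpr hi)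

/-- The Lagrange interpolation basis function `φ_α` takes the value `δ_{αβ}` at the
interpolation point `x_β` (the point with barycentric coordinates `β/k`). -/
theorem stmt3 (n k : ℕ) (hk : 0 < k)
    (b : AffineBasis (Fin (n + 1)) ℝ (EuclideanSpace ℝ (Fin n)))
    (α β : Fin (n + 1) → ℕ) (hα : ∑ i, α i = k) (hβ : ∑ i, β i = k) :
    (∏ i, (Nat.factorial (α i) : ℝ))⁻¹ *
        ∏ i, ∏ j ∈ Finset.range (α i),
          ((k : ℝ) * b.coord i
              (Finset.univ.affineCombination ℝ (fun i => b i) (fun i => (β i : ℝ) / k)) - (j : ℝ))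
      = if α = β then 1 else 0 := by
  have hk' : (k : ℝ) ≠ 0 := by positivity
  have hweights : ∑ i, (β i : ℝ) / k = 1 := by
    rw [← sum_div, ← Nat.cast_sum, hβ, div_self hk']
  have hcoord : ∀ i, (k : ℝ) * b.coord i
      (univ.affineCombination ℝ (fun i => b i) (fun i => (β i : ℝ) / k)) = β i := fun i => by
    rw [b.coord_apply_combination_of_mem (mem_univ i) hweights, mul_div_cancel₀ _ hk']
  simp only [hcoord, prod_range_natCast_sub_eq_descFactorial]
  rw [← Nat.cast_prod, ← Nat.cast_prod, prod_descFactorial_eq_ite (hα.trans hβ.symm)]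
  split_ifs
  · exact inv_mul_cancel₀ (by positivity)
  · simp
end

section
/- The functions {φ_α : α ∈ T^n_k}, where φ_α(x) = (1/α!) ∏_{i=0}^n ∏_{j=0}^{α_i - 1} (k λ_i(x) - j), form a basis of the space P_k(T) of polynomials of degree at most k on an n-simplex T. -/
/-!
Evaluating `φ_α` at the lattice point `x_β` with barycentric coordinates `β / k` gives
`(1/α!) ∏ᵢ β_i (β_i - 1) ⋯ (β_i - α_i + 1)`, which vanishes unless `β_i ≥ α_i` for all `i`; since
`∑ α = ∑ β = k` this forces `α = β`, where the value is `1`. So `φ_α(x_β) = δ_αβ` and the `φ_α` are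
linearly independent. Each `φ_α` is a product of `k` affine functions, hence lies in `P_k(T)`, and
`dim P_k(T)` is at most the number of monomials of degree `≤ k` in `n` variables, which injects
into `T^n_k` by `m ↦ (k - |m|, m)`.
-/

open MvPolynomial Finset

noncomputable section

instance instFintypeSimplexLattice (ι : Type*) [Fintype ι] [DecidableEq ι] (k : ℕ) :
    Fintype {α : ι → ℕ // ∑ i, α i = k} :=
  Fintype.subtype (piAntidiag univ k) (by simp)

theorem linearIndependent_of_apply_eq_ite {R ι X : Type*} [Ring R] [DecidableEq ι]
    {f : ι → X → R} (x : ι → X) (h : ∀ i j, f i (x j) = if i = j then 1 else 0) :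
    LinearIndependent R f := by
  rw [linearIndependent_iff']
  intro s c hc i hi
  simpa [Finset.sum_apply, h, hi] using congrFun hc (x i)

section Lagrange

variable {ι K V P : Type*} [Fintype ι] [Field K] [AddCommGroup V] [Module K V] [AddTorsor V P]

def lagrangeFun (k : ℕ) (b : AffineBasis ι K P) (α : ι → ℕ) (x : P) : K :=
  (∏ i, ((α i).factorial : K))⁻¹ * ∏ i, ∏ j ∈ range (α i), ((k : K) * b.coord i x - j)

/-- For `k = 0` the weights do not sum to `1` and this is a junk point; it does not matter, since
then `α = 0` and `φ_0 ≡ 1`. -/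
def latticePoint (k : ℕ) (b : AffineBasis ι K P) (β : ι → ℕ) : P :=
  univ.affineCombination K b (fun i => (β i : K) / k)

variable [CharZero K] {k : ℕ} (b : AffineBasis ι K P)

theorem natCast_mul_coord_latticePoint {β : ι → ℕ} (hβ : ∑ i, β i = k) (i : ι) :
    (k : K) * b.coord i (latticePoint k b β) = β i := by
  rcases eq_or_ne k 0 with rfl | hk
  · simp [(Finset.sum_eq_zero_iff.mp hβ) i (mem_univ i)]
  · have hw : ∑ i, (β i : K) / k = 1 := by
      rw [← Finset.sum_div, ← Nat.cast_sum, hβ, div_self (Nat.cast_ne_zero.mpr hk)]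
    rw [latticePoint, b.coord_apply_combination_of_mem (mem_univ i) hw]
    field_simp

theorem lagrangeFun_latticePoint [DecidableEq ι] {α β : ι → ℕ} (hα : ∑ i, α i = k)
    (hβ : ∑ i, β i = k) :
    lagrangeFun k b α (latticePoint k b β) = if α = β then 1 else 0 := by
  simp only [lagrangeFun, natCast_mul_coord_latticePoint b hβ, prod_range_natCast_sub,
    ← Nat.descFactorial_eq_prod_range]
  split_ifs with h
  · subst h
    simp only [Nat.descFactorial_self]
    exact inv_mul_cancel₀ <| prod_ne_zero_iff.mpr fun i _ =>
      Nat.cast_ne_zero.mpr (α i).factorial_ne_zero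
  · obtain ⟨i, hi⟩ : ∃ i, β i < α i := by
      by_contra! hle
      exact h (funext fun i => (sum_eq_sum_iff_of_le fun i _ => hle i).mp
        (hα.trans hβ.symm) i (mem_univ i))
    rw [prod_eq_zero (f := fun i => ((β i).descFactorial (α i) : K)) (mem_univ i)
      (by simp [Nat.descFactorial_eq_zero_iff_lt.mpr hi]), mul_zero]

theorem linearIndependent_lagrangeFun [DecidableEq ι] :
    LinearIndependent K fun α : {α : ι → ℕ // ∑ i, α i = k} => lagrangeFun k b α.1 :=
  linearIndependent_of_apply_eq_ite (fun β => latticePoint k b β.1) fun α β => by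
    simp only [lagrangeFun_latticePoint b α.2 β.2, Subtype.ext_iff]

end Lagrange

namespace MvPolynomial

variable {σ R : Type*} [Fintype σ] [DecidableEq σ] [CommRing R]

def ofAffineMap (f : (σ → R) →ᵃ[R] R) : MvPolynomial σ R :=
  ∑ j, monomial (Finsupp.single j 1) (f.linear (Pi.single j 1)) + C (f 0)

@[simp]
theorem eval_ofAffineMap (f : (σ → R) →ᵃ[R] R) (x : σ → R) : eval x (ofAffineMap f) = f x := by
  have hf : f x = f.linear x + f 0 := by simpa using f.map_vadd 0 x
  have hlin : f.linear x = ∑ j, f.linear (Pi.single j 1) * x j := by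
    conv_lhs => rw [pi_eq_sum_univ' x]
    simp [mul_comm]
  simp [ofAffineMap, hf, hlin, eval_monomial]

theorem totalDegree_ofAffineMap_le (f : (σ → R) →ᵃ[R] R) : (ofAffineMap f).totalDegree ≤ 1 := by
  refine (totalDegree_add _ _).trans (max_le ?_ (by simp))
  refine (totalDegree_finsetSum _ _).trans (Finset.sup_le fun j _ => ?_)
  exact (totalDegree_monomial_le _ _).trans (by simp)

end MvPolynomial

section PolyFunctions

variable (σ K : Type*) [Field K]

def polyFunctionsOfDegreeLE (k : ℕ) : Submodule K ((σ → K) → K) :=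
  (restrictTotalDegree σ K k).map (LinearMap.pi fun x => (aeval x).toLinearMap)

instance [Finite σ] (k : ℕ) : Module.Finite K (polyFunctionsOfDegreeLE σ K k) :=
  Module.Finite.map _ _

variable {σ K}

theorem mem_polyFunctionsOfDegreeLE {k : ℕ} {g : (σ → K) → K} :
    g ∈ polyFunctionsOfDegreeLE σ K k ↔
      ∃ p : MvPolynomial σ K, p.totalDegree ≤ k ∧ ∀ x, g x = eval x p := by
  simp only [polyFunctionsOfDegreeLE, Submodule.mem_map, mem_restrictTotalDegree, funext_iff,
    LinearMap.pi_apply, AlgHom.toLinearMap_apply, eq_comm]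
  rfl

end PolyFunctions

section LagrangePoly

variable {ι σ K : Type*} [Fintype ι] [Fintype σ] [DecidableEq σ] [Field K]

def lagrangePoly (k : ℕ) (b : AffineBasis ι K (σ → K)) (α : ι → ℕ) : MvPolynomial σ K :=
  C (∏ i, ((α i).factorial : K))⁻¹ *
    ∏ i, ∏ j ∈ range (α i), ofAffineMap ((k : K) • b.coord i - AffineMap.const K _ (j : K))

theorem eval_lagrangePoly (k : ℕ) (b : AffineBasis ι K (σ → K)) (α : ι → ℕ) (x : σ → K) :
    eval x (lagrangePoly k b α) = lagrangeFun k b α x := by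
  simp only [lagrangePoly, lagrangeFun, map_mul, map_prod, eval_C, eval_ofAffineMap,
    AffineMap.coe_sub, AffineMap.coe_smul, AffineMap.coe_const, Pi.sub_apply, Pi.smul_apply,
    Function.const_apply, smul_eq_mul]

theorem totalDegree_lagrangePoly_le (k : ℕ) (b : AffineBasis ι K (σ → K)) (α : ι → ℕ) :
    (lagrangePoly k b α).totalDegree ≤ ∑ i, α i := by
  refine (totalDegree_mul _ _).trans ?_
  rw [totalDegree_C, zero_add]
  refine (totalDegree_finsetProd _ _).trans (sum_le_sum fun i _ => ?_)
  refine (totalDegree_finsetProd _ _).trans ?_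
  simpa using sum_le_sum fun j (_ : j ∈ range (α i)) => totalDegree_ofAffineMap_le
    ((k : K) • b.coord i - AffineMap.const K _ (j : K))

theorem lagrangeFun_mem_polyFunctionsOfDegreeLE {k : ℕ} (b : AffineBasis ι K (σ → K))
    {α : ι → ℕ} (hα : ∑ i, α i = k) : lagrangeFun k b α ∈ polyFunctionsOfDegreeLE σ K k :=
  mem_polyFunctionsOfDegreeLE.mpr ⟨lagrangePoly k b α,
    (totalDegree_lagrangePoly_le k b α).trans hα.le, fun x => (eval_lagrangePoly k b α x).symm⟩

end LagrangePoly

theorem natCard_monomials_le_natCard_simplexLattice (n k : ℕ) :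
    Nat.card {m : Fin n →₀ ℕ | (m.sum fun _ e => e) ≤ k} ≤
      Nat.card {α : Fin (n + 1) → ℕ // ∑ i, α i = k} := by
  refine Nat.card_le_card_of_injective
    (fun m => ⟨Fin.cons (k - ∑ i, m.1 i) m.1, ?_⟩) fun m m' h => ?_
  · have hm : ∑ i, m.1 i ≤ k := by simpa [Finsupp.sum_fintype] using m.2
    rw [Fin.sum_cons]
    omega
  · have h' : (m.1 : Fin n → ℕ) = m'.1 :=
      (Fin.cons_injective2 (α := fun _ => ℕ) (congrArg Subtype.val h)).2
    exact Subtype.ext (DFunLike.coe_injective h')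

theorem span_lagrangeFun {K : Type*} [Field K] [CharZero K] (n k : ℕ)
    (b : AffineBasis (Fin (n + 1)) K (Fin n → K)) :
    Submodule.span K (Set.range fun α : {α : Fin (n + 1) → ℕ // ∑ i, α i = k} =>
      lagrangeFun k b α.1) = polyFunctionsOfDegreeLE (Fin n) K k := by
  refine Submodule.eq_of_le_of_finrank_le ?_ ?_
  · exact Submodule.span_le.mpr <| Set.range_subset_iff.mpr fun α =>
      lagrangeFun_mem_polyFunctionsOfDegreeLE b α.2
  · calc Module.finrank K (polyFunctionsOfDegreeLE (Fin n) K k)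
        ≤ Module.finrank K (restrictTotalDegree (Fin n) K k) := Submodule.finrank_map_le _ _
      _ = Nat.card {m : Fin n →₀ ℕ | (m.sum fun _ e => e) ≤ k} :=
        Module.finrank_eq_nat_card_basis (basisRestrictSupport K _)
      _ ≤ Nat.card {α : Fin (n + 1) → ℕ // ∑ i, α i = k} :=
        natCard_monomials_le_natCard_simplexLattice n k
      _ = _ := by
        rw [Nat.card_eq_fintype_card, finrank_span_eq_card (linearIndependent_lagrangeFun b)]

/-- The Lagrange functions `φ_α`, `α ∈ T^n_k`, form a basis of the space of polynomial
functions of total degree at most `k` on an `n`-simplex (given by an affine basis `b`,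
whose barycentric coordinates are `b.coord i`). -/
theorem stmt4 (n k : ℕ) (b : AffineBasis (Fin (n + 1)) ℝ (Fin n → ℝ)) :
    LinearIndependent ℝ (fun α : {α : Fin (n + 1) → ℕ // ∑ i, α i = k} =>
        fun x : Fin n → ℝ =>
          (∏ i, (Nat.factorial (α.1 i) : ℝ))⁻¹ *
            ∏ i, ∏ j ∈ Finset.range (α.1 i), ((k : ℝ) * b.coord i x - (j : ℝ))) ∧
      (Submodule.span ℝ (Set.range (fun α : {α : Fin (n + 1) → ℕ // ∑ i, α i = k} =>
          fun x : Fin n → ℝ =>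
            (∏ i, (Nat.factorial (α.1 i) : ℝ))⁻¹ *
              ∏ i, ∏ j ∈ Finset.range (α.1 i), ((k : ℝ) * b.coord i x - (j : ℝ)))) :
          Set ((Fin n → ℝ) → ℝ)) =
        {g : (Fin n → ℝ) → ℝ | ∃ p : MvPolynomial (Fin n) ℝ,
          p.totalDegree ≤ k ∧ ∀ x, g x = MvPolynomial.eval x p} := by
  exact ⟨linearIndependent_lagrangeFun b, Set.ext fun g =>
    (SetLike.ext_iff.mp (span_lagrangeFun n k b) g).trans mem_polyFunctionsOfDegreeLE⟩
end
end

section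
/- Let f be an ℓ-dimensional face of an n-simplex T, and for i ∉ f let F_i denote the facet of T opposite vertex x_i, with unit normal n_{F_i}, and let n^f_{f+i} denote a unit vector normal to f and tangent to the (ℓ+1)-face f+i. Then the vectors n̂_{F_i} := n^f_{f+i} / (n^f_{f+i} · n_{F_i}), i ∈ f*, form a basis of the normal plane N^f of f that is dual to {n_{F_i} : i ∈ f*}, i.e., n̂_{F_i} · n_{F_j} = δ_{ij} for i, j ∈ f*. -/
/-!
Off the diagonal, `n^f_{f+i}` lies in the direction of `f+i ⊆ F_j`, so it is orthogonal to
`n_{F_j}`. On the diagonal, the orthogonal complement of the direction of the facet `F_i` is the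
line `ℝ n_{F_i}`, so `n^f_{f+i} · n_{F_i} = 0` would put `n^f_{f+i}` in the direction of `F_i`.
By affine independence the directions of `f+i` and `F_i` meet in the direction of `f`, to which
the nonzero vector `n^f_{f+i}` is normal: a contradiction. The rescaled vectors are therefore
biorthogonal to the `n_{F_j}`, hence independent, and there are `#f* ≥ dim N^f` of them.
-/

open scoped RealInnerProductSpace

open Module

lemma AffineIndependent.vectorSpan_image_inf_eq {k V P ι : Type*} [Ring k] [Nontrivial k]
    [AddCommGroup V] [Module k V] [AddTorsor V P] {x : ι → P} (hx : AffineIndependent k x)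
    {s t : Set ι} (hst : (s ∩ t).Nonempty) :
    vectorSpan k (x '' s) ⊓ vectorSpan k (x '' t) = vectorSpan k (x '' (s ∩ t)) := by
  obtain ⟨p, hps, hpt⟩ := hst
  rw [← direction_affineSpan, ← direction_affineSpan, ← direction_affineSpan,
    ← hx.inf_affineSpan_eq_affineSpan_inter, AffineSubspace.direction_inf_of_mem
      (mem_affineSpan k (Set.mem_image_of_mem x hps))
      (mem_affineSpan k (Set.mem_image_of_mem x hpt))]

section InnerProductSpace

variable {V : Type*} [NormedAddCommGroup V] [InnerProductSpace ℝ V]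

lemma linearIndependent_of_inner_eq_ite {ι : Type*} [DecidableEq ι] {w u : ι → V}
    (h : ∀ i j, ⟪w i, u j⟫ = if i = j then 1 else 0) : LinearIndependent ℝ w := by
  refine LinearIndependent.of_comp (LinearMap.pi fun j => innerₛₗ ℝ (u j)) ?_
  convert Pi.linearIndependent_single_one ι ℝ with i
  · ext j
    simp [real_inner_comm, h, Pi.single_apply, eq_comm]
  · rfl

variable {P ι : Type*} [MetricSpace P] [NormedAddTorsor V P] [FiniteDimensional ℝ V]
  [Fintype ι] [DecidableEq ι] {x : ι → P}

lemma AffineIndependent.finrank_orthogonal_vectorSpan_image_le (hx : AffineIndependent ℝ x)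
    (hcard : Fintype.card ι = finrank ℝ V + 1) (s : Finset ι) :
    finrank ℝ (vectorSpan ℝ (x '' s))ᗮ ≤ sᶜ.card := by
  have hsum := (vectorSpan ℝ (x '' s)).finrank_add_finrank_orthogonal
  rcases s.eq_empty_or_nonempty with rfl | hs
  · simp [Finset.card_univ] at hsum ⊢
    omega
  · classical
    have hs1 := hs.card_pos
    have hK := hx.finrank_vectorSpan_image_finset (s := s) (n := s.card - 1) (by omega)
    rw [Finset.coe_image] at hK
    rw [Finset.card_compl]
    omega

lemma AffineIndependent.orthogonal_vectorSpan_facet_eq_span_singleton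
    (hx : AffineIndependent ℝ x) (hcard : Fintype.card ι = finrank ℝ V + 1) {i : ι} {u : V}
    (hu : u ∈ (vectorSpan ℝ (x '' {j | j ≠ i}))ᗮ) (hu0 : u ≠ 0) :
    (vectorSpan ℝ (x '' {j | j ≠ i}))ᗮ = ℝ ∙ u := by
  refine (Submodule.eq_of_le_of_finrank_le
    ((Submodule.span_singleton_le_iff_mem _ _).2 hu) ?_).symm
  calc finrank ℝ (vectorSpan ℝ (x '' {j | j ≠ i}))ᗮ ≤ ({i}ᶜ : Finset ι)ᶜ.card := by
        have h := hx.finrank_orthogonal_vectorSpan_image_le hcard {i}ᶜ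
        rw [Finset.coe_compl, Finset.coe_singleton] at h
        exact h
    _ = finrank ℝ (ℝ ∙ u) := by simp [finrank_span_singleton hu0]

lemma AffineIndependent.inner_ne_zero_of_mem_vectorSpan_insert (hx : AffineIndependent ℝ x)
    (hcard : Fintype.card ι = finrank ℝ V + 1) {f : Set ι} (hf : f.Nonempty) {i : ι} (hi : i ∉ f)
    {v u : V} (hv : v ∈ vectorSpan ℝ (x '' insert i f)) (hvf : v ∈ (vectorSpan ℝ (x '' f))ᗮ)
    (hv0 : v ≠ 0) (hu : u ∈ (vectorSpan ℝ (x '' {j | j ≠ i}))ᗮ) (hu0 : u ≠ 0) : ⟪v, u⟫ ≠ 0 := by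
  intro hvu
  have hvL : v ∈ vectorSpan ℝ (x '' {j | j ≠ i}) := by
    rw [← Submodule.orthogonal_orthogonal (vectorSpan ℝ _),
      hx.orthogonal_vectorSpan_facet_eq_span_singleton hcard hu hu0,
      Submodule.mem_orthogonal_singleton_iff_inner_left]
    exact hvu
  have hinter : insert i f ∩ {j | j ≠ i} = f := by grind
  have hvK : v ∈ vectorSpan ℝ (x '' f) := by
    rw [← hinter, ← hx.vectorSpan_image_inf_eq (by rwa [hinter])]
    exact ⟨hv, hvL⟩
  exact hv0 ((vectorSpan ℝ (x '' f)).orthogonal_disjoint.le_bot ⟨hvK, hvf⟩)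

end InnerProductSpace

/-- For an `ℓ`-face `f` of a nondegenerate `n`-simplex with vertices `x`, the rescaled
vectors `n̂_{F_i} = n^f_{f+i} / (n^f_{f+i} · n_{F_i})`, `i ∉ f`, form a basis of the normal
plane of `f` dual to the facet normals `{n_{F_i} : i ∉ f}`. Here `nF i` is the unit normal
of the facet opposite vertex `x i`, and `nf i` is a unit vector normal to `f` and tangent
to the face `f + i`. -/
theorem stmt6 (n : ℕ)
    (x : Fin (n + 1) → EuclideanSpace ℝ (Fin n)) (hx : AffineIndependent ℝ x)
    (f : Finset (Fin (n + 1))) (hf : f.Nonempty)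
    (nF nf : Fin (n + 1) → EuclideanSpace ℝ (Fin n))
    (hnF1 : ∀ i ∉ f, ‖nF i‖ = 1)
    (hnFperp : ∀ i ∉ f, nF i ∈ (vectorSpan ℝ (x '' {j | j ≠ i}))ᗮ)
    (hnf1 : ∀ i ∉ f, ‖nf i‖ = 1)
    (hnftan : ∀ i ∉ f, nf i ∈ vectorSpan ℝ (x '' (insert i ↑f)))
    (hnfperp : ∀ i ∉ f, nf i ∈ (vectorSpan ℝ (x '' ↑f))ᗮ) :
    (∀ i ∉ f, ∀ j ∉ f,
        ⟪(⟪nf i, nF i⟫)⁻¹ • nf i, nF j⟫ = if i = j then (1 : ℝ) else 0) ∧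
      LinearIndependent ℝ (fun i : {i : Fin (n + 1) // i ∉ f} =>
        (⟪nf i.1, nF i.1⟫)⁻¹ • nf i.1) ∧
      Submodule.span ℝ ((fun i => (⟪nf i, nF i⟫)⁻¹ • nf i) '' {i | i ∉ f}) =
        (vectorSpan ℝ (x '' ↑f))ᗮ := by
  have hcard : Fintype.card (Fin (n + 1)) = finrank ℝ (EuclideanSpace ℝ (Fin n)) + 1 := by simp
  have hdiag : ∀ i ∉ f, ⟪nf i, nF i⟫ ≠ 0 := fun i hi =>
    hx.inner_ne_zero_of_mem_vectorSpan_insert hcard (Finset.coe_nonempty.2 hf) hi (hnftan i hi)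
      (hnfperp i hi) (norm_ne_zero_iff.1 (by simp [hnf1 i hi])) (hnFperp i hi)
      (norm_ne_zero_iff.1 (by simp [hnF1 i hi]))
  have hdual : ∀ i ∉ f, ∀ j ∉ f,
      ⟪(⟪nf i, nF i⟫)⁻¹ • nf i, nF j⟫ = if i = j then (1 : ℝ) else 0 := by
    intro i hi j hj
    rw [real_inner_smul_left]
    split_ifs with hij
    · subst hij
      exact inv_mul_cancel₀ (hdiag i hi)
    · have hsub : insert i (f : Set (Fin (n + 1))) ⊆ {k | k ≠ j} := by grind
      rw [Submodule.inner_right_of_mem_orthogonal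
        (vectorSpan_mono ℝ (Set.image_mono hsub) (hnftan i hi)) (hnFperp j hj), mul_zero]
  have hli : LinearIndependent ℝ (fun i : {i : Fin (n + 1) // i ∉ f} =>
      (⟪nf i.1, nF i.1⟫)⁻¹ • nf i.1) :=
    linearIndependent_of_inner_eq_ite (u := fun j => nF j.1) fun i j => by
      simp [hdual i.1 i.2 j.1 j.2, Subtype.ext_iff]
  refine ⟨hdual, hli, Submodule.eq_of_le_of_finrank_le ?_ ?_⟩
  · rw [Submodule.span_le]
    rintro _ ⟨i, hi, rfl⟩
    exact Submodule.smul_mem _ _ (hnfperp i hi)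
  · calc finrank ℝ (vectorSpan ℝ (x '' ↑f))ᗮ ≤ fᶜ.card :=
          hx.finrank_orthogonal_vectorSpan_image_le hcard f
      _ = Fintype.card {i : Fin (n + 1) // i ∉ f} := by simp [Finset.card_compl]
      _ = _ := by
        rw [Set.image_eq_range]
        exact (finrank_span_eq_card hli).symm
end

section
/- Let T be an n-simplex with n ≥ 2, and let v ∈ P_k(T; ℝ^n) have vanishing tangential component on every facet of T. Then v vanishes identically on every subsimplex of T of dimension at most n−2. -/
/-!
At a point `x` of a subsimplex of dimension at most `n - 2` two distinct facets `F_i`, `F_j`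
meet, so `v x` is a multiple both of `n_i` and of `n_j`. These normals are not parallel: the
facet direction `ker (coord i).linear` is a hyperplane, so it is exactly the kernel of
`u ↦ n_i ⬝ u`, while the edge `b i - b m` towards a third vertex `m` lies in the direction of
`F_j` but not of `F_i`. Hence `v x = 0`.
-/

open LinearMap

theorem LinearMap.ker_eq_ker_of_le_of_ne_zero {K V : Type*} [Field K] [AddCommGroup V] [Module K V]
    {φ ψ : Module.Dual K V} (hle : ker φ ≤ ker ψ) (hψ : ψ ≠ 0) : ker φ = ker ψ := by
  have hφ : φ ≠ 0 := by
    rintro rfl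
    rw [ker_zero, top_le_iff, ker_eq_top] at hle
    exact hψ hle
  exact ((isCoatom_ker_of_surjective (surjective_of_ne_zero hφ)).le_iff.mp hle).resolve_left
    (mt ker_eq_top.mp hψ) |>.symm

section AffineBasis

variable {ι k V P : Type*} [Field k] [AddCommGroup V] [Module k V] [AddTorsor V P]
  (b : AffineBasis ι k P)

theorem AffineBasis.not_ker_linear_coord_le {i j m : ι} (hij : i ≠ j) (him : i ≠ m)
    (hjm : j ≠ m) : ¬ ker (b.coord j).linear ≤ ker (b.coord i).linear := by
  intro hle
  have hj : b.coord j (b i) - b.coord j (b m) = 0 := by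
    rw [b.coord_apply_ne hij.symm, b.coord_apply_ne hjm, sub_zero]
  have hi : b.coord i (b i) - b.coord i (b m) = 1 := by
    rw [b.coord_apply_eq, b.coord_apply_ne him, sub_zero]
  have := @hle (b i -ᵥ b m)
  simp only [mem_ker, AffineMap.linearMap_vsub, vsub_eq_sub, hj, hi] at this
  exact one_ne_zero (this trivial)

theorem AffineBasis.ne_smul_of_ker_linear_coord_le {ψ : ι → Module.Dual k V} {i j m : ι}
    (hi : ker (b.coord i).linear ≤ ker (ψ i)) (hj : ker (b.coord j).linear ≤ ker (ψ j))
    (hψ : ψ i ≠ 0) (hij : i ≠ j) (him : i ≠ m) (hjm : j ≠ m) (t : k) :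
    ψ i ≠ t • ψ j := by
  intro h
  apply b.not_ker_linear_coord_le hij him hjm
  calc ker (b.coord j).linear ≤ ker (ψ j) := hj
    _ ≤ ker (t • ψ j) := ker_le_ker_smul _ _
    _ = ker (ψ i) := by rw [h]
    _ = ker (b.coord i).linear := (ker_eq_ker_of_le_of_ne_zero hi hψ).symm

end AffineBasis

theorem eq_zero_of_eq_smul_of_eq_smul {K V : Type*} [Field K] [AddCommGroup V] [Module K V]
    {w x y : V} {a c : K} (hx : w = a • x) (hy : w = c • y) (hxy : ∀ t : K, x ≠ t • y) :
    w = 0 := by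
  by_contra hw
  have ha : a ≠ 0 := by rintro rfl; exact hw (by rw [hx, zero_smul])
  apply hxy (a⁻¹ * c)
  rw [mul_smul, ← hy, hx, smul_smul, inv_mul_cancel₀ ha, one_smul]

theorem stmt16_general (n : ℕ) (hn : 2 ≤ n)
    (b : AffineBasis (Fin (n + 1)) ℝ (Fin n → ℝ))
    (nF : Fin (n + 1) → (Fin n → ℝ))
    (hnF1 : ∀ i, ∑ l, nF i l * nF i l = 1)
    (hnFperp : ∀ i, ∀ u : Fin n → ℝ, (b.coord i).linear u = 0 → ∑ l, u l * nF i l = 0)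
    (v : (Fin n → ℝ) → (Fin n → ℝ))
    (htan : ∀ i, ∀ x, b.coord i x = 0 → v x = (∑ l, v x l * nF i l) • nF i) :
    ∀ f : Finset (Fin (n + 1)), f.card ≤ n - 1 →
      ∀ x, (∀ j ∉ f, b.coord j x = 0) → v x = 0 := by
  intro f hf x hx
  obtain ⟨i₁, hi₁, i₂, hi₂, h₁₂⟩ := Finset.one_lt_card.mp <| show 1 < fᶜ.card by
    rw [Finset.card_compl, Fintype.card_fin]
    omega
  obtain ⟨m, -, hm⟩ : ∃ m ∈ Finset.univ, m ∉ ({i₁, i₂} : Finset (Fin (n + 1))) := by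
    refine Finset.exists_mem_notMem_of_card_lt_card ?_
    grw [Finset.card_le_two, Finset.card_univ, Fintype.card_fin]
    omega
  rw [Finset.mem_insert, Finset.mem_singleton, not_or] at hm
  let ψ i := dotProductEquiv ℝ (Fin n) (nF i)
  have hker i : ker (b.coord i).linear ≤ ker (ψ i) := fun u hu =>
    (dotProduct_comm _ _).trans (hnFperp i u hu)
  have hψ i : ψ i ≠ 0 := fun h => by
    simpa [ψ, dotProduct, hnF1] using LinearMap.congr_fun h (nF i)
  have hnot_parallel (t : ℝ) : nF i₁ ≠ t • nF i₂ := fun h =>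
    b.ne_smul_of_ker_linear_coord_le (hker i₁) (hker i₂) (hψ i₁) h₁₂
      (Ne.symm hm.1) (Ne.symm hm.2) t (by simp only [ψ, h, map_smul])
  exact eq_zero_of_eq_smul_of_eq_smul (htan i₁ x (hx i₁ (Finset.mem_compl.mp hi₁)))
    (htan i₂ x (hx i₂ (Finset.mem_compl.mp hi₂))) hnot_parallel

/-- If `v ∈ P_k(T; ℝⁿ)` (with `n ≥ 2`) has vanishing tangential component on every facet of
the `n`-simplex `T` (affine basis `b`, barycentric coordinates `b.coord i`, facet unit
normals `nF i`), then `v` vanishes identically on every subsimplex of dimension ≤ `n - 2`,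
i.e. at every point whose barycentric coordinates are supported on at most `n - 1`
vertices. -/
theorem stmt16 (n k : ℕ) (hn : 2 ≤ n)
    (b : AffineBasis (Fin (n + 1)) ℝ (Fin n → ℝ))
    (nF : Fin (n + 1) → (Fin n → ℝ))
    (hnF1 : ∀ i, ∑ l, nF i l * nF i l = 1)
    (hnFperp : ∀ i, ∀ u : Fin n → ℝ, (b.coord i).linear u = 0 → ∑ l, u l * nF i l = 0)
    (v : (Fin n → ℝ) → (Fin n → ℝ))
    (hv : ∃ p : Fin n → MvPolynomial (Fin n) ℝ,
      (∀ j, (p j).totalDegree ≤ k) ∧ ∀ x j, v x j = MvPolynomial.eval x (p j))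
    (htan : ∀ i, ∀ x, b.coord i x = 0 → v x = (∑ l, v x l * nF i l) • nF i) :
    ∀ f : Finset (Fin (n + 1)), f.card ≤ n - 1 →
      ∀ x, (∀ j ∉ f, b.coord j x = 0) → v x = 0 :=
  stmt16_general n hn b nF hnF1 hnFperp v htan
end
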